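/- arXiv:2406.14059 — 6 statements merged into one kernel-verified Lean document; each statement's English description precedes it below -/
import Mathlib

section
/- Let C ∈ (0,1) and let (Z_t)_{t≥1} and (Z*_t)_{t≥1} be sequences in ℝ^d (or any real normed space) such that ‖Z_{t+1} − Z*_t‖ ≤ C‖Z_t − Z*_t‖ for all t ≥ 1 (i.e., the algorithm producing Z_{t+1} from Z_t is C-contractive toward the solution Z*_t). Then for every T ≥ 1, Σ_{t=1}^T ‖Z_t − Z*_t‖² ≤ (1/(1−C)²) Σ_{t=2}^T ‖Z*_t − Z*_{t−1}‖² + (1/(1−C)) ‖Z_1 − Z*_1‖². -/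
/-!
Write `aₜ = ‖Zₜ - Z*ₜ‖` and `bₜ = ‖Z*ₜ - Z*ₜ₋₁‖`. The triangle inequality through `Z*ₜ` and
contractivity give `aₜ₊₁ ≤ C aₜ + bₜ₊₁`; convexity of the square turns this into
`aₜ₊₁² ≤ C aₜ² + bₜ₊₁² / (1 - C)`. Summing this recursion bounds `(1 - C) ∑ aₜ²` by
`a₁² + ∑ bₜ² / (1 - C)`.
-/

open Finset

lemma sq_le_mul_sq_add_sq_div_one_sub {C x y z : ℝ} (hC0 : 0 ≤ C) (hC1 : C < 1)
    (hz : 0 ≤ z) (hzxy : z ≤ C * x + y) :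
    z ^ 2 ≤ C * x ^ 2 + y ^ 2 / (1 - C) := by
  have h1C : 0 < 1 - C := by linarith
  -- `(Cx + y)² = (C·x + (1 - C)·(y / (1 - C)))²` is below the same convex combination of squares.
  have hconvex : (1 - C) * (C * x + y) ^ 2 ≤ (1 - C) * (C * x ^ 2) + y ^ 2 := by
    nlinarith [mul_nonneg hC0 (sq_nonneg ((1 - C) * x - y))]
  rw [← mul_le_mul_iff_right₀ h1C, mul_add, mul_div_cancel₀ _ h1C.ne']
  calc (1 - C) * z ^ 2 ≤ (1 - C) * (C * x + y) ^ 2 := by gcongr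
    _ ≤ (1 - C) * (C * x ^ 2) + y ^ 2 := hconvex

lemma one_sub_mul_sum_Icc_add_le_of_le_mul_add {C : ℝ} {u c : ℕ → ℝ}
    (hrec : ∀ t, 1 ≤ t → u (t + 1) ≤ C * u t + c (t + 1)) (T : ℕ) (hT : 1 ≤ T) :
    (1 - C) * ∑ t ∈ Icc 1 T, u t + C * u T ≤ u 1 + ∑ t ∈ Icc 2 T, c t := by
  induction T, hT using Nat.le_induction with
  | base => simp only [Icc_self, sum_singleton, Icc_eq_empty_of_lt one_lt_two, sum_empty]; linarith
  | succ T hT ih =>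
    rw [sum_Icc_succ_top (by omega), sum_Icc_succ_top (by omega)]
    linarith [hrec T hT]

lemma one_sub_mul_sum_Icc_le_of_le_mul_add {C : ℝ} (hC0 : 0 ≤ C) {u c : ℕ → ℝ}
    (hu : ∀ t, 0 ≤ u t) (hrec : ∀ t, 1 ≤ t → u (t + 1) ≤ C * u t + c (t + 1))
    (T : ℕ) (hT : 1 ≤ T) :
    (1 - C) * ∑ t ∈ Icc 1 T, u t ≤ u 1 + ∑ t ∈ Icc 2 T, c t := by
  linarith [one_sub_mul_sum_Icc_add_le_of_le_mul_add hrec T hT, mul_nonneg hC0 (hu T)]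

lemma norm_sub_succ_le_of_contract {E : Type*} [SeminormedAddCommGroup E] {C : ℝ}
    {z z' w w' : E} (hcontract : ‖z' - w‖ ≤ C * ‖z - w‖) :
    ‖z' - w'‖ ≤ C * ‖z - w‖ + ‖w' - w‖ :=
  calc ‖z' - w'‖ ≤ ‖z' - w‖ + ‖w - w'‖ := norm_sub_le_norm_sub_add_norm_sub _ _ _
    _ ≤ C * ‖z - w‖ + ‖w' - w‖ := by rw [norm_sub_rev w]; gcongr

theorem stmt0_general {E : Type*} [NormedAddCommGroup E]
    (C : ℝ) (hC0 : 0 < C) (hC1 : C < 1)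
    (Z Zstar : ℕ → E)
    (hcontract : ∀ t, 1 ≤ t → ‖Z (t + 1) - Zstar t‖ ≤ C * ‖Z t - Zstar t‖) :
    ∀ T, 1 ≤ T →
      ∑ t ∈ Finset.Icc 1 T, ‖Z t - Zstar t‖ ^ 2 ≤
        (1 / (1 - C) ^ 2) * ∑ t ∈ Finset.Icc 2 T, ‖Zstar t - Zstar (t - 1)‖ ^ 2 +
          (1 / (1 - C)) * ‖Z 1 - Zstar 1‖ ^ 2 := by
  intro T hT
  have h1C : 0 < 1 - C := by linarith
  have hrec : ∀ t, 1 ≤ t → ‖Z (t + 1) - Zstar (t + 1)‖ ^ 2 ≤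
      C * ‖Z t - Zstar t‖ ^ 2 + ‖Zstar (t + 1) - Zstar (t + 1 - 1)‖ ^ 2 / (1 - C) :=
    fun t ht => sq_le_mul_sq_add_sq_div_one_sub hC0.le hC1 (norm_nonneg _)
      (norm_sub_succ_le_of_contract (hcontract t ht))
  have hsum := one_sub_mul_sum_Icc_le_of_le_mul_add hC0.le (u := fun t => ‖Z t - Zstar t‖ ^ 2)
    (c := fun t => ‖Zstar t - Zstar (t - 1)‖ ^ 2 / (1 - C)) (fun t => sq_nonneg _) hrec T hT
  rw [← sum_div] at hsum
  rw [← mul_le_mul_iff_right₀ h1C]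
  refine hsum.trans_eq ?_
  field_simp
  ring

/-- **Tracking bound for contractive algorithms** (Theorem 1 of the paper).
If each update is `C`-contractive toward the current solution `Zstar t`, then the
tracking error over the first `T` rounds is bounded by the quadratic path length of the
solutions times `1/(1-C)^2`, plus the initial error times `1/(1-C)`. -/
theorem stmt0 {E : Type*} [NormedAddCommGroup E] [NormedSpace ℝ E]
    (C : ℝ) (hC0 : 0 < C) (hC1 : C < 1)
    (Z Zstar : ℕ → E)
    (hcontract : ∀ t, 1 ≤ t → ‖Z (t + 1) - Zstar t‖ ≤ C * ‖Z t - Zstar t‖) :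
    ∀ T, 1 ≤ T →
      ∑ t ∈ Finset.Icc 1 T, ‖Z t - Zstar t‖ ^ 2 ≤
        (1 / (1 - C) ^ 2) * ∑ t ∈ Finset.Icc 2 T, ‖Zstar t - Zstar (t - 1)‖ ^ 2 +
          (1 / (1 - C)) * ‖Z 1 - Zstar 1‖ ^ 2 :=
  stmt0_general C hC0 hC1 Z Zstar hcontract
end

section
/- Let C ∈ (0,1), b ≥ 0 and c_1, x_1 ∈ ℝ with x_1 − c_1 ≥ b/(1−C). Define c_{t+1} = c_t − b and x_{t+1} = x_t − (1−C)(x_t − c_t) for all t ≥ 1 (gradient descent with step size 1−C on the quadratic functions f_t(x) = (x − c_t)²/2, whose minimizers are c_t). Then each update is C-contractive toward c_t (i.e., x_{t+1} − c_t = C(x_t − c_t)), x_t − c_t ≥ b/(1−C) for all t, and for every T ≥ 1, Σ_{t=1}^T (x_t − c_t)² ≥ T b²/(1−C)² ≥ (1/(1−C)²) Σ_{t=2}^T (c_t − c_{t−1})². This shows the tracking bound for C-contractive algorithms, with leading constant 1/(1−C)², is tight. -/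
/-- **Tightness of the contraction-based tracking bound** (Theorem 2 of the paper).
Gradient descent with step size `1 - C` on quadratics `f_t(x) = (x - c t)^2 / 2` whose
minimizers drift linearly (`c (t+1) = c t - b`) is `C`-contractive, stays at distance at
least `b/(1-C)` from the minimizers, and its tracking error is at least
`T b^2/(1-C)^2 ≥ (1/(1-C)^2) ∑ (c t - c (t-1))^2`. -/
theorem stmt1 (C b : ℝ) (hC0 : 0 < C) (hC1 : C < 1) (hb : 0 ≤ b)
    (c x : ℕ → ℝ) (h1 : x 1 - c 1 ≥ b / (1 - C))
    (hc : ∀ t, 1 ≤ t → c (t + 1) = c t - b)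
    (hx : ∀ t, 1 ≤ t → x (t + 1) = x t - (1 - C) * (x t - c t)) :
    (∀ t, 1 ≤ t → x (t + 1) - c t = C * (x t - c t)) ∧
    (∀ t, 1 ≤ t → x t - c t ≥ b / (1 - C)) ∧
    (∀ T : ℕ, 1 ≤ T →
      (T : ℝ) * b ^ 2 / (1 - C) ^ 2 ≤ ∑ t ∈ Finset.Icc 1 T, (x t - c t) ^ 2 ∧
      (1 / (1 - C) ^ 2) * ∑ t ∈ Finset.Icc 2 T, (c t - c (t - 1)) ^ 2 ≤
        (T : ℝ) * b ^ 2 / (1 - C) ^ 2) := by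
  have h1C : (0:ℝ) < 1 - C := by linarith
  have hcontr : ∀ t, 1 ≤ t → x (t + 1) - c t = C * (x t - c t) := by
    intro t ht
    rw [hx t ht]; ring
  have hdist : ∀ t, 1 ≤ t → x t - c t ≥ b / (1 - C) := by
    intro t ht
    induction t with
    | zero => omega
    | succ n ih =>
      rcases Nat.eq_or_lt_of_le ht with h | h
      · simpa [← h] using h1
      · have hn : 1 ≤ n := by omega
        have ihn := ih hn
        have := hcontr n hn
        rw [hc n hn]
        have hbd : b / (1 - C) * (1 - C) = b := by field_simp
        nlinarith [mul_le_mul_of_nonneg_left ihn hC0.le]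
  refine ⟨hcontr, hdist, fun T hT => ?_⟩
  have hterm : ∀ t ∈ Finset.Icc 1 T, (b / (1 - C)) ^ 2 ≤ (x t - c t) ^ 2 := by
    intro t htm
    have ht1 : 1 ≤ t := (Finset.mem_Icc.mp htm).1
    have := hdist t ht1
    have hb' : 0 ≤ b / (1 - C) := div_nonneg hb h1C.le
    nlinarith
  have hsum1 : (T : ℝ) * b ^ 2 / (1 - C) ^ 2 ≤ ∑ t ∈ Finset.Icc 1 T, (x t - c t) ^ 2 := by
    calc (T : ℝ) * b ^ 2 / (1 - C) ^ 2
        = ∑ _t ∈ Finset.Icc 1 T, (b / (1 - C)) ^ 2 := by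
          rw [Finset.sum_const, Nat.card_Icc]
          simp [div_pow]
          ring
      _ ≤ _ := Finset.sum_le_sum hterm
  refine ⟨hsum1, ?_⟩
  have hc2 : ∀ t ∈ Finset.Icc 2 T, (c t - c (t - 1)) ^ 2 = b ^ 2 := by
    intro t htm
    have ht2 : 2 ≤ t := (Finset.mem_Icc.mp htm).1
    have h1t : 1 ≤ t - 1 := by omega
    have := hc (t - 1) h1t
    have heq : t - 1 + 1 = t := by omega
    rw [heq] at this
    rw [this]; ring
  rw [Finset.sum_congr rfl hc2, Finset.sum_const, Nat.card_Icc]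
  have hTm : ((T + 1 - 2 : ℕ) : ℝ) ≤ (T : ℝ) := by
    have : T + 1 - 2 ≤ T := by omega
    exact_mod_cast this
  have hb2 : (0:ℝ) ≤ b ^ 2 := sq_nonneg b
  have hC2 : (0:ℝ) < (1 - C) ^ 2 := by positivity
  rw [nsmul_eq_mul, one_div, div_eq_mul_inv, mul_comm (((1 - C) ^ 2)⁻¹)]
  exact mul_le_mul_of_nonneg_right (mul_le_mul_of_nonneg_right hTm hb2)
    (inv_nonneg.mpr hC2.le)
end

section
/- For every a ∈ [0,1] and all x, y ∈ ℝ, the zero-sum game objective ℓ(x,y) = x² + 3 sin²(x) + a sin²(x) sin²(y) − y² − 3 sin²(y) satisfies the restricted secant inequality with constant 1/4 in each variable at the minimizer 0: namely, x · (2x + (1/2) sin(2x)(3 + a sin²(y))) ≥ (1/4) x², and y · (2y + (1/2) sin(2y)(3 − a sin²(x))) ≥ (1/4) y². (Here 2x + (1/2) sin(2x)(3 + a sin²(y)) = ∂ℓ/∂x and −∂ℓ/∂y = 2y + (1/2) sin(2y)(3 − a sin²(x)).) -/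
lemma key_xsin (x : ℝ) : x * Real.sin (2 * x) ≥ -(7/8) * x ^ 2 := by
  rcases le_or_gt |x| (8/7) with h | h
  · have hpi := Real.pi_gt_d6
    have hxs : 0 ≤ x * Real.sin (2 * x) := by
      rcases le_or_gt 0 x with hx | hx
      · have hx' : x ≤ 8/7 := by rwa [abs_of_nonneg hx] at h
        have : 0 ≤ Real.sin (2 * x) :=
          Real.sin_nonneg_of_nonneg_of_le_pi (by linarith) (by linarith)
        exact mul_nonneg hx this
      · have hx' : -(8/7) ≤ x := by
          have := neg_abs_le x; rw [abs_of_neg hx] at h; linarith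
        have : Real.sin (2 * x) ≤ 0 :=
          Real.sin_nonpos_of_nonpos_of_neg_pi_le (by linarith) (by linarith)
        nlinarith
    nlinarith [sq_nonneg x]
  · have h1 : x * Real.sin (2 * x) ≥ -|x| := by
      have h2 : |x * Real.sin (2 * x)| ≤ |x| := by
        rw [abs_mul]
        calc |x| * |Real.sin (2 * x)| ≤ |x| * 1 :=
              mul_le_mul_of_nonneg_left (abs_le_one_iff_mul_self_le_one.mpr (by nlinarith [Real.sin_sq_le_one (2*x), sq_abs (Real.sin (2*x))])) (abs_nonneg x)
          _ = |x| := mul_one _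
      have := neg_abs_le (x * Real.sin (2 * x))
      linarith
    have h3 : |x| ≤ (7/8) * x ^ 2 := by
      nlinarith [sq_abs x, abs_nonneg x]
    linarith

lemma key_main (c t : ℝ) (hc0 : 0 ≤ c) (hc4 : c ≤ 4)
    (h : t * Real.sin (2 * t) ≥ -(7/8) * t ^ 2) :
    t * (2 * t + (1 / 2) * Real.sin (2 * t) * c) ≥ (1 / 4) * t ^ 2 := by
  nlinarith [mul_nonneg hc0 (by linarith : t * Real.sin (2 * t) + (7/8) * t ^ 2 ≥ 0)]

/-- **Restricted secant inequality for the non-monotone zero-sum game**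
(Proposition 2 of the paper). For every `a ∈ [0,1]` the partial gradients of
`ℓ(x,y) = x² + 3 sin²x + a sin²x sin²y - y² - 3 sin²y` satisfy the RSI with
constant `1/4` at the minimizer `0`, in each variable. -/
theorem stmt4 (a : ℝ) (ha : a ∈ Set.Icc (0 : ℝ) 1) (x y : ℝ) :
    x * (2 * x + (1 / 2) * Real.sin (2 * x) * (3 + a * Real.sin y ^ 2)) ≥
      (1 / 4) * x ^ 2 ∧
    y * (2 * y + (1 / 2) * Real.sin (2 * y) * (3 - a * Real.sin x ^ 2)) ≥
      (1 / 4) * y ^ 2 := by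
  obtain ⟨ha0, ha1⟩ := ha
  have hsy := Real.sin_sq_le_one y
  have hsx := Real.sin_sq_le_one x
  have hsy0 := sq_nonneg (Real.sin y)
  have hsx0 := sq_nonneg (Real.sin x)
  constructor
  · exact key_main _ x (by nlinarith) (by nlinarith) (key_xsin x)
  · exact key_main _ y (by nlinarith) (by nlinarith) (key_xsin y)
end

section
/- Let Z ⊆ ℝ^d be a nonempty closed convex set, μ > 0, and let (g_t)_{t=1}^T be vectors in ℝ^d with ‖g_t‖ ≤ G for all t. Define Z_1 ∈ Z and Z_{t+1} = proj_Z(Z_t − (1/(μt)) g_t). Then for every fixed comparator C ∈ Z, Σ_{t=1}^T [⟨g_t, Z_t − C⟩ − (μ/2)‖Z_t − C‖²] ≤ (G²/(2μ))(log T + 1). -/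
/-!
Write `a t = ‖Z t - C‖²`. Since `C ∈ S` and projecting onto a convex set does not increase
the distance to its points, one step with step size `η = 1/(μt)` gives
`⟪g t, Z t - C⟫ ≤ (a t - a (t+1)) / (2η) + (η/2) ‖g t‖²`. After subtracting `(μ/2) a t` the
distance terms become `w t - w (t+1)` with `w t = μ (t-1)/2 · a t`, which telescope to
`-w (T+1) ≤ 0`; what remains is `G²/(2μ)` times the harmonic sum `∑ 1/t ≤ log T + 1`.
-/

open scoped RealInnerProductSpace
open Finset

theorem sum_Icc_inv_le_log_add_one (n : ℕ) : ∑ t ∈ Icc 1 n, (t : ℝ)⁻¹ ≤ Real.log n + 1 := by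
  have h := harmonic_le_one_add_log n
  simp only [harmonic_eq_sum_Icc, Rat.cast_sum, Rat.cast_inv, Rat.cast_natCast] at h
  linarith

theorem Finset.sum_Icc_one_sub_succ {M : Type*} [AddCommGroup M] (w : ℕ → M) (n : ℕ) :
    ∑ t ∈ Icc 1 n, (w t - w (t + 1)) = w 1 - w (n + 1) := by
  rw [← Ico_add_one_right_eq_Icc, ← neg_sub, ← sum_Ico_sub w (by omega : 1 ≤ n + 1),
    ← sum_neg_distrib]
  simp only [neg_sub]

section

variable {E : Type*} [NormedAddCommGroup E] [InnerProductSpace ℝ E]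

theorem Convex.norm_sub_le_of_forall_norm_sub_le {S : Set E} (hS : Convex ℝ S) {x v c : E}
    (hv : v ∈ S) (hmin : ∀ y ∈ S, ‖x - v‖ ≤ ‖x - y‖) (hc : c ∈ S) :
    ‖v - c‖ ≤ ‖x - c‖ := by
  have : Nonempty S := ⟨⟨v, hv⟩⟩
  have hbdd : BddBelow (Set.range fun y : S => ‖x - y‖) :=
    ⟨0, by rintro _ ⟨y, rfl⟩; exact norm_nonneg _⟩
  have hinf : ‖x - v‖ = ⨅ y : S, ‖x - y‖ :=
    le_antisymm (le_ciInf fun y => hmin y y.2) (ciInf_le hbdd ⟨v, hv⟩)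
  have hvar : ⟪x - v, c - v⟫ ≤ 0 := (norm_eq_iInf_iff_real_inner_le_zero hS hv).mp hinf c hc
  have hexpand : ‖x - c‖ ^ 2 = ‖x - v‖ ^ 2 - 2 * ⟪x - v, c - v⟫ + ‖v - c‖ ^ 2 := by
    rw [show x - c = (x - v) - (c - v) by abel, norm_sub_sq_real, ← norm_neg (c - v), neg_sub]
  refine (sq_le_sq₀ (norm_nonneg _) (norm_nonneg _)).mp ?_
  nlinarith [sq_nonneg ‖x - v‖]

theorem two_mul_inner_le_of_norm_sub_le_norm_sub_smul {η : ℝ} {z z' g c : E}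
    (h : ‖z' - c‖ ≤ ‖z - η • g - c‖) :
    2 * η * ⟪g, z - c⟫ ≤ ‖z - c‖ ^ 2 - ‖z' - c‖ ^ 2 + η ^ 2 * ‖g‖ ^ 2 := by
  have hexpand : ‖z - η • g - c‖ ^ 2 = ‖z - c‖ ^ 2 - 2 * η * ⟪g, z - c⟫ + η ^ 2 * ‖g‖ ^ 2 := by
    rw [show z - η • g - c = (z - c) - η • g by abel, norm_sub_sq_real, real_inner_smul_right,
      norm_smul, mul_pow, Real.norm_eq_abs, sq_abs, real_inner_comm]
    ring
  nlinarith [pow_le_pow_left₀ (norm_nonneg _) h 2]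

theorem inner_sub_le_of_step_inv_mul {μ : ℝ} (hμ : 0 < μ) {t : ℕ} (ht : 1 ≤ t) {z z' g c : E}
    (h : ‖z' - c‖ ≤ ‖z - (1 / (μ * t)) • g - c‖) :
    ⟪g, z - c⟫ - μ / 2 * ‖z - c‖ ^ 2 ≤
      (μ * ((t : ℝ) - 1) / 2 * ‖z - c‖ ^ 2 - μ * t / 2 * ‖z' - c‖ ^ 2) +
        ‖g‖ ^ 2 / (2 * μ) * (t : ℝ)⁻¹ := by
  have htpos : (0 : ℝ) < t := by exact_mod_cast ht
  have hstep := two_mul_inner_le_of_norm_sub_le_norm_sub_smul h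
  have hscaled := mul_le_mul_of_nonneg_left hstep (by positivity : (0 : ℝ) ≤ μ * t / 2)
  have hcancel : μ * t / 2 * (2 * (1 / (μ * t)) * ⟪g, z - c⟫) = ⟪g, z - c⟫ := by
    field_simp
  have hsq : μ * t / 2 * ((1 / (μ * t)) ^ 2 * ‖g‖ ^ 2) = ‖g‖ ^ 2 / (2 * μ) * (t : ℝ)⁻¹ := by
    field_simp
  rw [hcancel, mul_add, hsq] at hscaled
  linarith

theorem sum_inner_sub_le_of_step_inv_mul {μ G : ℝ} (hμ : 0 < μ) {T : ℕ} {g Z : ℕ → E} {c : E}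
    (hg : ∀ t ∈ Icc 1 T, ‖g t‖ ≤ G)
    (hstep : ∀ t ∈ Icc 1 T, ‖Z (t + 1) - c‖ ≤ ‖Z t - (1 / (μ * t)) • g t - c‖) :
    ∑ t ∈ Icc 1 T, (⟪g t, Z t - c⟫ - μ / 2 * ‖Z t - c‖ ^ 2) ≤
      G ^ 2 / (2 * μ) * ∑ t ∈ Icc 1 T, (t : ℝ)⁻¹ := by
  set w : ℕ → ℝ := fun t => μ * ((t : ℝ) - 1) / 2 * ‖Z t - c‖ ^ 2
  have hterm : ∀ t ∈ Icc 1 T, ⟪g t, Z t - c⟫ - μ / 2 * ‖Z t - c‖ ^ 2 ≤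
      (w t - w (t + 1)) + G ^ 2 / (2 * μ) * (t : ℝ)⁻¹ := by
    intro t ht
    have ht1 := (mem_Icc.mp ht).1
    have hgsq : ‖g t‖ ^ 2 ≤ G ^ 2 := pow_le_pow_left₀ (norm_nonneg _) (hg t ht) 2
    have hcoef : ‖g t‖ ^ 2 / (2 * μ) * (t : ℝ)⁻¹ ≤ G ^ 2 / (2 * μ) * (t : ℝ)⁻¹ := by
      gcongr
    have hw : w t - w (t + 1) =
        μ * ((t : ℝ) - 1) / 2 * ‖Z t - c‖ ^ 2 - μ * t / 2 * ‖Z (t + 1) - c‖ ^ 2 := by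
      simp only [w]
      push_cast
      ring
    linarith [inner_sub_le_of_step_inv_mul hμ ht1 (hstep t ht)]
  have hw_last : 0 ≤ w (T + 1) := by
    have : ((T + 1 : ℕ) : ℝ) - 1 = T := by push_cast; ring
    simp only [w, this]
    positivity
  calc _ ≤ ∑ t ∈ Icc 1 T, ((w t - w (t + 1)) + G ^ 2 / (2 * μ) * (t : ℝ)⁻¹) := sum_le_sum hterm
    _ ≤ G ^ 2 / (2 * μ) * ∑ t ∈ Icc 1 T, (t : ℝ)⁻¹ := by
      rw [sum_add_distrib, ← mul_sum, sum_Icc_one_sub_succ, show w 1 = 0 by simp [w]]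
      linarith

end

theorem stmt6_general {d : ℕ} (S : Set (EuclideanSpace ℝ (Fin d)))
    (hSconvex : Convex ℝ S)
    (proj : EuclideanSpace ℝ (Fin d) → EuclideanSpace ℝ (Fin d))
    (hproj : ∀ x, proj x ∈ S ∧ ∀ y ∈ S, ‖x - proj x‖ ≤ ‖x - y‖)
    (μ G : ℝ) (hμ : 0 < μ)
    (T : ℕ)
    (g : ℕ → EuclideanSpace ℝ (Fin d)) (hg : ∀ t ∈ Finset.Icc 1 T, ‖g t‖ ≤ G)
    (Z : ℕ → EuclideanSpace ℝ (Fin d))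
    (hZ : ∀ t, 1 ≤ t → Z (t + 1) = proj (Z t - (1 / (μ * t)) • g t))
    (C : EuclideanSpace ℝ (Fin d)) (hC : C ∈ S) :
    ∑ t ∈ Finset.Icc 1 T, (⟪g t, Z t - C⟫ - μ / 2 * ‖Z t - C‖ ^ 2) ≤
      G ^ 2 / (2 * μ) * (Real.log T + 1) := by
  have hstep : ∀ t ∈ Icc 1 T, ‖Z (t + 1) - C‖ ≤ ‖Z t - (1 / (μ * t)) • g t - C‖ := by
    intro t ht
    rw [hZ t (mem_Icc.mp ht).1]
    exact hSconvex.norm_sub_le_of_forall_norm_sub_le (hproj _).1 (hproj _).2 hC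
  calc _ ≤ G ^ 2 / (2 * μ) * ∑ t ∈ Icc 1 T, (t : ℝ)⁻¹ :=
        sum_inner_sub_le_of_step_inv_mul hμ hg hstep
    _ ≤ G ^ 2 / (2 * μ) * (Real.log T + 1) := by
      gcongr
      exact sum_Icc_inv_le_log_add_one T

/-- **Regret of the online projected forward method with step sizes `1/(μt)`**
(Proposition 1 of the paper). Against any fixed comparator `C` in the closed convex
set `S`, the iterates `Z (t+1) = proj (Z t - (1/(μ t)) g t)` with `‖g t‖ ≤ G` satisfy
`∑_{t=1}^T [⟨g t, Z t - C⟩ - (μ/2)‖Z t - C‖²] ≤ (G²/(2μ)) (log T + 1)`. -/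
theorem stmt6 {d : ℕ} (S : Set (EuclideanSpace ℝ (Fin d)))
    (hSclosed : IsClosed S) (hSconvex : Convex ℝ S) (hSne : S.Nonempty)
    (proj : EuclideanSpace ℝ (Fin d) → EuclideanSpace ℝ (Fin d))
    (hproj : ∀ x, proj x ∈ S ∧ ∀ y ∈ S, ‖x - proj x‖ ≤ ‖x - y‖)
    (μ G : ℝ) (hμ : 0 < μ) (hG : 0 ≤ G)
    (T : ℕ) (hT : 1 ≤ T)
    (g : ℕ → EuclideanSpace ℝ (Fin d)) (hg : ∀ t ∈ Finset.Icc 1 T, ‖g t‖ ≤ G)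
    (Z : ℕ → EuclideanSpace ℝ (Fin d)) (hZ1 : Z 1 ∈ S)
    (hZ : ∀ t, 1 ≤ t → Z (t + 1) = proj (Z t - (1 / (μ * t)) • g t))
    (C : EuclideanSpace ℝ (Fin d)) (hC : C ∈ S) :
    ∑ t ∈ Finset.Icc 1 T, (⟪g t, Z t - C⟫ - μ / 2 * ‖Z t - C‖ ^ 2) ≤
      G ^ 2 / (2 * μ) * (Real.log T + 1) :=
  stmt6_general S hSconvex proj hproj μ G hμ T g hg Z hZ C hC
end

section
/- Let μ > 0, G ≥ 0, D ≥ 0, g, z ∈ ℝ^d with ‖g‖ ≤ G, and define h(u) = ⟨g, u⟩ + (μ/2)‖u − z‖². Then for every 0 < λ ≤ μ/(2(μD + G)²), the function u ↦ exp(−λ h(u)) is concave on the closed ball B(z, D) = {u : ‖u − z‖ ≤ D}; consequently, for every finite family of points u_1, …, u_K ∈ B(z, D) and every probability vector (p_1, …, p_K), Σ_{i=1}^K p_i exp(−λ h(u_i)) ≤ exp(−λ h(Σ_{i=1}^K p_i u_i)). -/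
/-!
Along a segment `t ↦ x + t (y - x)` of the ball, `h` has derivative `⟪∇h, y - x⟫` with
`∇h(u) = g + μ (u - z)` of norm at most `μD + G`, and second derivative `μ ‖y - x‖²`. Since
`(e^{-λq})'' = λ e^{-λq} (λ q'² - q'')`, concavity on each segment reduces to
`λ (μD + G)² ≤ μ`, which the bound on `λ` gives with a factor 2 to spare. The finite inequality
is Jensen's.
-/

open scoped RealInnerProductSpace

open Set Real Metric

theorem concaveOn_exp_neg_mul_of_mul_sq_deriv_le {s : Set ℝ} (hs : Convex ℝ s)
    {q q' q'' : ℝ → ℝ} {lam : ℝ} (hlam : 0 ≤ lam)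
    (hq : ∀ t ∈ s, HasDerivAt q (q' t) t) (hq' : ∀ t ∈ s, HasDerivAt q' (q'' t) t)
    (hle : ∀ t ∈ s, lam * q' t ^ 2 ≤ q'' t) :
    ConcaveOn ℝ s (fun t => exp (-lam * q t)) := by
  have hexp : ∀ t ∈ s, HasDerivAt (fun t => exp (-lam * q t))
      (exp (-lam * q t) * (-lam * q' t)) t :=
    fun t ht => ((hq t ht).const_mul (-lam)).exp
  refine concaveOn_of_hasDerivWithinAt2_nonpos hs
    (fun t ht => (hexp t ht).continuousAt.continuousWithinAt)
    (fun t ht => (hexp t (interior_subset ht)).hasDerivWithinAt)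
    (fun t ht => (((hexp t (interior_subset ht)).mul
      ((hq' t (interior_subset ht)).const_mul (-lam))).hasDerivWithinAt)) fun t ht => ?_
  have ht := interior_subset ht
  calc exp (-lam * q t) * (-lam * q' t) * (-lam * q' t) + exp (-lam * q t) * (-lam * q'' t)
      = lam * exp (-lam * q t) * (lam * q' t ^ 2 - q'' t) := by ring
    _ ≤ 0 := mul_nonpos_of_nonneg_of_nonpos (by positivity) (sub_nonpos.2 (hle t ht))

theorem concaveOn_of_forall_concaveOn_add_smul_sub {E : Type*} [AddCommGroup E] [Module ℝ E]
    {s : Set E} (hs : Convex ℝ s) {f : E → ℝ}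
    (hf : ∀ x ∈ s, ∀ y ∈ s, ConcaveOn ℝ (Icc 0 1) (fun t : ℝ => f (x + t • (y - x)))) :
    ConcaveOn ℝ s f := by
  refine ⟨hs, fun x hx y hy a b ha hb hab => ?_⟩
  have h := (hf x hx y hy).2 (left_mem_Icc.2 zero_le_one) (right_mem_Icc.2 zero_le_one)
    ha hb hab
  have hb' : a • (0 : ℝ) + b • 1 = b := by simp
  have hxy : x + b • (y - x) = a • x + b • y := by
    rw [eq_sub_of_add_eq hab, smul_sub, sub_smul, one_smul]; abel
  simpa [hb', hxy] using h

section InnerProductSpace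

variable {E : Type*} [NormedAddCommGroup E] [InnerProductSpace ℝ E]

theorem hasDerivAt_inner_add_sq_norm_add_smul (g z x v : E) (μ t : ℝ) :
    HasDerivAt (fun t : ℝ => ⟪g, x + t • v⟫ + μ / 2 * ‖x + t • v - z‖ ^ 2)
      ⟪g + μ • (x + t • v - z), v⟫ t := by
  have hline : HasDerivAt (fun t : ℝ => x + t • v) v t :=
    ((hasDerivAt_id t).smul_const v).const_add x |>.congr_deriv (one_smul ℝ v)
  refine (((hasDerivAt_const t g).inner ℝ hline).add
    (((hline.sub_const z).norm_sq).const_mul (μ / 2))).congr_deriv ?_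
  rw [inner_zero_left, add_zero, inner_add_left, real_inner_smul_left]
  ring

theorem hasDerivAt_inner_add_smul_add_smul_sub (g z x v : E) (μ t : ℝ) :
    HasDerivAt (fun t : ℝ => ⟪g + μ • (x + t • v - z), v⟫) (μ * ‖v‖ ^ 2) t := by
  have hgrad : HasDerivAt (fun t : ℝ => g + μ • (x + t • v - z)) (μ • v) t :=
    ((((hasDerivAt_id t).smul_const v).const_add x).sub_const z).const_smul μ |>.const_add g
      |>.congr_deriv (by simp)
  refine (hgrad.inner ℝ (hasDerivAt_const t v)).congr_deriv ?_
  simp [real_inner_smul_left]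

theorem norm_add_smul_sub_le {g z u : E} {μ G D : ℝ} (hμ : 0 ≤ μ) (hg : ‖g‖ ≤ G)
    (hu : u ∈ closedBall z D) : ‖g + μ • (u - z)‖ ≤ μ * D + G := by
  rw [mem_closedBall, dist_eq_norm] at hu
  calc ‖g + μ • (u - z)‖ ≤ ‖g‖ + μ * ‖u - z‖ := by
        simpa [norm_smul, abs_of_nonneg hμ] using norm_add_le g (μ • (u - z))
    _ ≤ μ * D + G := by nlinarith

theorem concaveOn_exp_neg_mul_inner_add_sq_norm {g z : E} {μ G D lam : ℝ} (hμ : 0 ≤ μ)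
    (hg : ‖g‖ ≤ G) (hlam0 : 0 ≤ lam) (hlam : lam * (μ * D + G) ^ 2 ≤ μ) :
    ConcaveOn ℝ (closedBall z D) (fun u => exp (-lam * (⟪g, u⟫ + μ / 2 * ‖u - z‖ ^ 2))) := by
  refine concaveOn_of_forall_concaveOn_add_smul_sub (convex_closedBall z D)
    fun x hx y hy => concaveOn_exp_neg_mul_of_mul_sq_deriv_le (convex_Icc 0 1) hlam0
      (fun t _ => hasDerivAt_inner_add_sq_norm_add_smul g z x (y - x) μ t)
      (fun t _ => hasDerivAt_inner_add_smul_add_smul_sub g z x (y - x) μ t) fun t ht => ?_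
  set w := g + μ • (x + t • (y - x) - z)
  have hw : ‖w‖ ≤ μ * D + G :=
    norm_add_smul_sub_le hμ hg ((convex_closedBall z D).add_smul_sub_mem hx hy ht)
  calc lam * ⟪w, y - x⟫ ^ 2 ≤ lam * (‖w‖ * ‖y - x‖) ^ 2 :=
        mul_le_mul_of_nonneg_left
          (sq_le_sq.2 <| (abs_real_inner_le_norm w (y - x)).trans (le_abs_self _)) hlam0
    _ ≤ lam * ((μ * D + G) * ‖y - x‖) ^ 2 := by gcongr
    _ ≤ μ * ‖y - x‖ ^ 2 := by rw [mul_pow, ← mul_assoc]; gcongr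

end InnerProductSpace

theorem stmt9_general {d : ℕ} (μ G D : ℝ) (hμ : 0 < μ)
    (g z : EuclideanSpace ℝ (Fin d)) (hg : ‖g‖ ≤ G)
    (h : EuclideanSpace ℝ (Fin d) → ℝ)
    (hh : ∀ u, h u = ⟪g, u⟫ + μ / 2 * ‖u - z‖ ^ 2)
    (lam : ℝ) (hlam0 : 0 < lam) (hlam : lam ≤ μ / (2 * (μ * D + G) ^ 2)) :
    ConcaveOn ℝ (Metric.closedBall z D) (fun u => Real.exp (-lam * h u)) ∧
    ∀ (K : ℕ) (u : Fin K → EuclideanSpace ℝ (Fin d)) (p : Fin K → ℝ),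
      (∀ i, 0 ≤ p i) → ∑ i, p i = 1 →
      (∀ i, u i ∈ Metric.closedBall z D) →
      ∑ i, p i * Real.exp (-lam * h (u i)) ≤
        Real.exp (-lam * h (∑ i, p i • u i)) := by
  have hlam' : lam * (μ * D + G) ^ 2 ≤ μ := by
    rcases (sq_nonneg (μ * D + G)).eq_or_lt with hS | hS
    · rw [← hS, mul_zero]; exact hμ.le
    · calc lam * (μ * D + G) ^ 2 ≤ μ / 2 := by rwa [← le_div_iff₀ hS, div_div]
        _ ≤ μ := by linarith
  have hconc : ConcaveOn ℝ (closedBall z D) (fun u => exp (-lam * h u)) := by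
    simpa only [hh] using concaveOn_exp_neg_mul_inner_add_sq_norm hμ.le hg hlam0.le hlam'
  refine ⟨hconc, fun K u p hp hsum hu => ?_⟩
  simpa only [smul_eq_mul] using
    hconc.le_map_sum (t := Finset.univ) (fun i _ => hp i) hsum (fun i _ => hu i)

/-- **Exp-concavity of the aggregation losses** (used in Theorems 3 and 4 of the
paper). For `h(u) = ⟨g, u⟩ + (μ/2)‖u - z‖²` with `‖g‖ ≤ G` and any
`0 < λ ≤ μ/(2(μD + G)²)`, the function `u ↦ exp(-λ h(u))` is concave on the closed
ball `B(z, D)`; consequently the mix-loss (Jensen) inequality holds for any convex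
combination of points of that ball. -/
theorem stmt9 {d : ℕ} (μ G D : ℝ) (hμ : 0 < μ) (hG : 0 ≤ G) (hD : 0 ≤ D)
    (g z : EuclideanSpace ℝ (Fin d)) (hg : ‖g‖ ≤ G)
    (h : EuclideanSpace ℝ (Fin d) → ℝ)
    (hh : ∀ u, h u = ⟪g, u⟫ + μ / 2 * ‖u - z‖ ^ 2)
    (lam : ℝ) (hlam0 : 0 < lam) (hlam : lam ≤ μ / (2 * (μ * D + G) ^ 2)) :
    ConcaveOn ℝ (Metric.closedBall z D) (fun u => Real.exp (-lam * h u)) ∧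
    ∀ (K : ℕ) (u : Fin K → EuclideanSpace ℝ (Fin d)) (p : Fin K → ℝ),
      (∀ i, 0 ≤ p i) → ∑ i, p i = 1 →
      (∀ i, u i ∈ Metric.closedBall z D) →
      ∑ i, p i * Real.exp (-lam * h (u i)) ≤
        Real.exp (-lam * h (∑ i, p i • u i)) :=
  stmt9_general μ G D hμ g z hg h hh lam hlam0 hlam
end

section
/- Let f : ℝ → ℝ be defined by f(x) = log(1 + e^{x²/2}). Then f is twice differentiable with f''(x) = (1 + e^{−x²/2} + x² e^{−x²/2}) / (1 + e^{−x²/2})² for all x, and 1/2 ≤ f''(x) < 1.31 for all x ∈ ℝ. Consequently, f and its rescalings f_a(x) = f(ax) are strongly convex and smooth: f_a is (a²/2)-strongly convex and (1.31 a²)-smooth. -/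
/-!
Writing `s = e^{-x²/2} ∈ (0, 1]`, one has `f'(x) = x / (1 + s)` and
`f''(x) = (1 + s + x² s) / (1 + s)²`. The lower bound `1/2` amounts to `s² ≤ 1 + 2 x² s`.
For the upper bound, the tangent line of `exp` at `-2` gives `x² s ≤ 2 e^{-2} + 2 s`, so
`f''(x) ≤ (1 + 2 e^{-2} + 3 s) / (1 + s)²`, a function of `s` alone whose maximum is about `1.302`.
The rescaled bounds follow from `(f(a ·))'' = a² f''(a ·)`, which holds for Mathlib's `deriv`
with no differentiability assumption since the junk value `0` is compatible with scaling.
-/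

/-- The building block `f(x) = log(1 + e^{x²/2})` of the periodic chaotic examples. -/
noncomputable def fLog (x : ℝ) : ℝ := Real.log (1 + Real.exp (x ^ 2 / 2))

open Real

theorem deriv_deriv_comp_mul_left {𝕜 E : Type*} [NontriviallyNormedField 𝕜]
    [NormedAddCommGroup E] [NormedSpace 𝕜 E] (c : 𝕜) (f : 𝕜 → E) (x : 𝕜) :
    deriv (deriv fun y => f (c * y)) x = c ^ 2 • deriv (deriv f) (c * x) := by
  have h : (deriv fun y => f (c * y)) = fun y => c • deriv f (c * y) :=
    funext (deriv_comp_mul_left c f)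
  rw [h, deriv_fun_const_smul_field, deriv_comp_mul_left, smul_smul, sq]

lemma contDiff_fLog : ContDiff ℝ 2 fLog :=
  (contDiff_const.add ((contDiff_id.pow 2).div_const 2).exp).log fun _ => by positivity

lemma hasDerivAt_fLog (x : ℝ) : HasDerivAt fLog (x / (1 + exp (-x ^ 2 / 2))) x := by
  have hq : HasDerivAt (fun y : ℝ => y ^ 2 / 2) x x := by
    simpa using (hasDerivAt_pow 2 x).div_const 2
  unfold fLog
  convert (hq.exp.const_add 1).log (by positivity) using 1
  rw [neg_div, exp_neg]
  field_simp
  ring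

lemma hasDerivAt_deriv_fLog (x : ℝ) :
    HasDerivAt (fun y => y / (1 + exp (-y ^ 2 / 2)))
      ((1 + exp (-x ^ 2 / 2) + x ^ 2 * exp (-x ^ 2 / 2)) / (1 + exp (-x ^ 2 / 2)) ^ 2) x := by
  have hq : HasDerivAt (fun y : ℝ => -y ^ 2 / 2) (-x) x := by
    simpa [neg_div] using ((hasDerivAt_pow 2 x).div_const 2).fun_neg
  exact ((hasDerivAt_id' x).fun_div (hq.exp.const_add 1) (by positivity)).congr_deriv (by ring)

lemma deriv_deriv_fLog (x : ℝ) :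
    deriv (deriv fLog) x =
      (1 + exp (-x ^ 2 / 2) + x ^ 2 * exp (-x ^ 2 / 2)) / (1 + exp (-x ^ 2 / 2)) ^ 2 := by
  rw [funext fun y => (hasDerivAt_fLog y).deriv]
  exact (hasDerivAt_deriv_fLog x).deriv

lemma exp_neg_two_lt : exp (-2 : ℝ) < 0.13536 := by
  have h2 : (7.389 : ℝ) < exp 2 := by
    rw [show (2 : ℝ) = 1 + 1 by norm_num, exp_add]
    nlinarith [exp_one_gt_d9]
  rw [exp_neg]
  exact (inv_lt_comm₀ (exp_pos 2) (by norm_num)).2 (by linarith)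

lemma mul_exp_neg_half_le (t : ℝ) : t * exp (-t / 2) ≤ 2 * exp (-2) + 2 * exp (-t / 2) := by
  have h : (t / 2 - 1) * exp (-t / 2) ≤ exp (t / 2 - 2) * exp (-t / 2) :=
    mul_le_mul_of_nonneg_right (by linarith [add_one_le_exp (t / 2 - 2)]) (exp_pos _).le
  rw [← exp_add, show t / 2 - 2 + -t / 2 = -2 by ring] at h
  linarith

lemma one_half_le_deriv_deriv_fLog (x : ℝ) : 1 / 2 ≤ deriv (deriv fLog) x := by
  have hs : 0 < exp (-x ^ 2 / 2) := exp_pos _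
  have hs_le_one : exp (-x ^ 2 / 2) ≤ 1 := exp_le_one_iff.2 (by nlinarith [sq_nonneg x])
  rw [deriv_deriv_fLog, le_div_iff₀ (by positivity)]
  nlinarith [mul_nonneg (sq_nonneg x) hs.le]

lemma deriv_deriv_fLog_lt (x : ℝ) : deriv (deriv fLog) x < 1.31 := by
  have hs : 0 < exp (-x ^ 2 / 2) := exp_pos _
  have hxs := mul_exp_neg_half_le (x ^ 2)
  rw [deriv_deriv_fLog, div_lt_iff₀ (by positivity)]
  -- `29/200` is close to the maximiser `s ≈ 0.153` of `(1 + 2 e^{-2} + 3 s) / (1 + s)²`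
  nlinarith [exp_neg_two_lt, sq_nonneg (exp (-x ^ 2 / 2) - 29 / 200)]

/-- **Curvature bounds for `f(x) = log(1 + e^{x²/2})`** (used in
Observation 1 of the paper). `f` is twice differentiable with
`f''(x) = (1 + e^{-x²/2} + x² e^{-x²/2}) / (1 + e^{-x²/2})²`, and
`1/2 ≤ f''(x) < 1.31` for all `x`; consequently the rescaling `f_a(x) = f(a x)` is
`(a²/2)`-strongly convex and `(1.31 a²)`-smooth (second derivative between `a²/2`
and `1.31 a²`). -/
theorem stmt17 :
    ContDiff ℝ 2 fLog ∧
    (∀ x : ℝ, deriv (deriv fLog) x =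
      (1 + Real.exp (-x ^ 2 / 2) + x ^ 2 * Real.exp (-x ^ 2 / 2)) /
        (1 + Real.exp (-x ^ 2 / 2)) ^ 2) ∧
    (∀ x : ℝ, 1 / 2 ≤ deriv (deriv fLog) x ∧ deriv (deriv fLog) x < 1.31) ∧
    (∀ a x : ℝ,
      a ^ 2 / 2 ≤ deriv (deriv fun y => fLog (a * y)) x ∧
      deriv (deriv fun y => fLog (a * y)) x ≤ 1.31 * a ^ 2) := by
  refine ⟨contDiff_fLog, deriv_deriv_fLog,
    fun x => ⟨one_half_le_deriv_deriv_fLog x, deriv_deriv_fLog_lt x⟩, fun a x => ?_⟩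
  rw [deriv_deriv_comp_mul_left, smul_eq_mul]
  have hlower := one_half_le_deriv_deriv_fLog (a * x)
  have hupper := deriv_deriv_fLog_lt (a * x)
  constructor <;> nlinarith [sq_nonneg a]
end
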